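/- Let 𝔽_q be a finite field of odd characteristic, let f ∈ 𝔽_q[X] be a polynomial of degree d ≥ 2 with gcd(d, q) = 1 such that f(−X) = −f(X) as polynomials, and let a, b ∈ 𝔽_q with a ≠ 0 and b ≠ 0. Then the (−1)-Boomerang Connectivity Table entry satisfies ₍₋₁₎B_f(a,b) ≤ d·(d − 1), where f is identified with its evaluation map 𝔽_q → 𝔽_q. -/
import Mathlib

/-- The `c`-Boomerang Connectivity Table entry of a function `F : 𝔽 → 𝔽` at `(a, b)`. -/
noncomputable def cBCT {𝔽 : Type*} [Field 𝔽] (F : 𝔽 → 𝔽) (c a b : 𝔽) : ℕ :=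
  Set.ncard {p : 𝔽 × 𝔽 |
    F (p.1 + p.2) - c * F p.1 = b ∧ c * F (p.1 + p.2 + a) - F (p.1 + a) = c * b}


open MvPolynomial in
private lemma memV_of_totalDegree_le {𝔽 : Type*} [Field 𝔽]
    {V : Submodule 𝔽 (MvPolynomial (Fin 2) 𝔽)} {M : ℕ}
    (h : ∀ i j : ℕ, i + j ≤ M → (X 0 : MvPolynomial (Fin 2) 𝔽) ^ i * X 1 ^ j ∈ V)
    {p : MvPolynomial (Fin 2) 𝔽} (hp : p.totalDegree ≤ M) : p ∈ V := by
  nth_rewrite 1 [MvPolynomial.as_sum p]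
  apply Submodule.sum_mem
  intro v hv
  have hdeg : v 0 + v 1 ≤ M := by
    have h1 : (v.sum fun _ e => e) ≤ p.totalDegree := MvPolynomial.le_totalDegree hv
    have h2 : (v.sum fun _ e => e) = v 0 + v 1 := by
      rw [Finsupp.sum_fintype _ _ (fun i => rfl), Fin.sum_univ_two]
    omega
  rw [monomial_eq, Finsupp.prod_fintype _ _ (fun i => pow_zero _), Fin.prod_univ_two,
    ← MvPolynomial.smul_eq_C_mul]
  exact Submodule.smul_mem _ _ (h _ _ hdeg)

open MvPolynomial in
private lemma zero_set_card_bound {𝔽 : Type*} [Field 𝔽] [Fintype 𝔽]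
    (h2 : (2 : 𝔽) ≠ 0) {d : ℕ} (hd : 2 ≤ d) {c e : 𝔽} (hc : c ≠ 0) (he : e ≠ 0)
    {A B : MvPolynomial (Fin 2) 𝔽}
    (hA : (A - C c * (X 0 ^ d + X 1 ^ d)).totalDegree ≤ d - 1)
    (hB : (B - C e * (X 0 ^ (d - 1) + X 1 ^ (d - 1))).totalDegree ≤ d - 2) :
    {v : Fin 2 → 𝔽 | eval v A = 0 ∧ eval v B = 0}.ncard ≤ d * (d - 1) := by
  classical
  set A₁ : MvPolynomial (Fin 2) 𝔽 := A - C c * (X 0 ^ d + X 1 ^ d) with hA₁def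
  set B₁ : MvPolynomial (Fin 2) 𝔽 := B - C e * (X 0 ^ (d - 1) + X 1 ^ (d - 1)) with hB₁def
  set S : Finset (MvPolynomial (Fin 2) 𝔽) :=
    (Finset.range (d - 1) ×ˢ Finset.range d).image
      (fun ij => X 0 ^ ij.1 * X 1 ^ ij.2) with hSdef
  set V : Submodule 𝔽 (MvPolynomial (Fin 2) 𝔽) :=
    Submodule.span 𝔽 (S : Set (MvPolynomial (Fin 2) 𝔽)) ⊔
      (Ideal.span {A, B}).restrictScalars 𝔽 with hVdef
  have hAdecomp : A = C c * (X 0 ^ d + X 1 ^ d) + A₁ := by rw [hA₁def]; ring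
  have hBdecomp : B = C e * (X 0 ^ (d - 1) + X 1 ^ (d - 1)) + B₁ := by rw [hB₁def]; ring
  have hgen : ∀ i j : ℕ, i ≤ d - 2 → j ≤ d - 1 →
      (X 0 : MvPolynomial (Fin 2) 𝔽) ^ i * X 1 ^ j ∈ V := by
    intro i j hi hj
    apply Submodule.mem_sup_left
    apply Submodule.subset_span
    simp only [hSdef, Finset.coe_image, Set.mem_image, Finset.mem_coe,
      Finset.mem_product, Finset.mem_range]
    exact ⟨(i, j), ⟨by omega, by omega⟩, rfl⟩
  have hidealA : ∀ p : MvPolynomial (Fin 2) 𝔽, p * A ∈ V := by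
    intro p
    exact Submodule.mem_sup_right (Ideal.mul_mem_left _ p (Ideal.subset_span (by simp)))
  have hidealB : ∀ p : MvPolynomial (Fin 2) 𝔽, p * B ∈ V := by
    intro p
    exact Submodule.mem_sup_right (Ideal.mul_mem_left _ p (Ideal.subset_span (by simp)))
  -- degree bound for monomials
  have hmd : ∀ i j : ℕ, ((X 0 : MvPolynomial (Fin 2) 𝔽) ^ i * X 1 ^ j).totalDegree ≤ i + j := by
    intro i j
    refine le_trans (totalDegree_mul _ _) ?_
    rw [totalDegree_X_pow, totalDegree_X_pow]
  have main : ∀ N : ℕ, ∀ i j : ℕ, i + j ≤ N →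
      (X 0 : MvPolynomial (Fin 2) 𝔽) ^ i * X 1 ^ j ∈ V := by
    intro N
    induction N using Nat.strong_induction_on with
    | _ N IH =>
    intro i j hij
    rcases Nat.lt_or_ge (i + j) N with hlt | hge
    · exact IH _ hlt i j le_rfl
    have hijN : i + j = N := le_antisymm hij hge
    -- everything of smaller total degree is in V
    have hlow : ∀ p : MvPolynomial (Fin 2) 𝔽, p.totalDegree < N → p ∈ V := by
      intro p hp
      exact memV_of_totalDegree_le (fun i' j' h => IH _ hp i' j' h) le_rfl
    -- relation from A : shift by d
    have relA : ∀ k l : ℕ, k + l + d = N →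
        (X 0 : MvPolynomial (Fin 2) 𝔽) ^ (k + d) * X 1 ^ l
          + X 0 ^ k * X 1 ^ (l + d) ∈ V := by
      intro k l hN
      have hcc : (C c : MvPolynomial (Fin 2) 𝔽) * C c⁻¹ = 1 := by
        rw [← map_mul, mul_inv_cancel₀ hc, map_one]
      have hid : (X 0 : MvPolynomial (Fin 2) 𝔽) ^ k * X 1 ^ l * C c⁻¹ * A =
          (X 0 ^ (k + d) * X 1 ^ l + X 0 ^ k * X 1 ^ (l + d))
            + X 0 ^ k * X 1 ^ l * C c⁻¹ * A₁ := by
        rw [hAdecomp, pow_add, pow_add]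
        linear_combination (X 0 : MvPolynomial (Fin 2) 𝔽) ^ k * X 1 ^ l *
          (X 0 ^ d + X 1 ^ d) * hcc
      have hmem := hidealA (X 0 ^ k * X 1 ^ l * C c⁻¹)
      rw [hid] at hmem
      have hjunk : (X 0 : MvPolynomial (Fin 2) 𝔽) ^ k * X 1 ^ l * C c⁻¹ * A₁ ∈ V := by
        apply hlow
        calc (X 0 ^ k * X 1 ^ l * C c⁻¹ * A₁).totalDegree
            ≤ (X 0 ^ k * X 1 ^ l * C c⁻¹ : MvPolynomial (Fin 2) 𝔽).totalDegree
                + A₁.totalDegree := totalDegree_mul _ _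
          _ ≤ ((X 0 ^ k * X 1 ^ l : MvPolynomial (Fin 2) 𝔽).totalDegree
                + (C c⁻¹ : MvPolynomial (Fin 2) 𝔽).totalDegree) + A₁.totalDegree := by gcongr <;> exact totalDegree_mul _ _
          _ ≤ (k + l + 0) + (d - 1) := by
              rw [totalDegree_C]
              exact add_le_add (add_le_add (hmd k l) le_rfl) hA
          _ < N := by omega
      have := Submodule.sub_mem V hmem hjunk
      simpa using this
    -- relation from B : shift by d - 1
    have relB : ∀ k l : ℕ, k + l + (d - 1) = N →
        (X 0 : MvPolynomial (Fin 2) 𝔽) ^ (k + (d - 1)) * X 1 ^ l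
          + X 0 ^ k * X 1 ^ (l + (d - 1)) ∈ V := by
      intro k l hN
      have hee : (C e : MvPolynomial (Fin 2) 𝔽) * C e⁻¹ = 1 := by
        rw [← map_mul, mul_inv_cancel₀ he, map_one]
      have hid : (X 0 : MvPolynomial (Fin 2) 𝔽) ^ k * X 1 ^ l * C e⁻¹ * B =
          (X 0 ^ (k + (d - 1)) * X 1 ^ l + X 0 ^ k * X 1 ^ (l + (d - 1)))
            + X 0 ^ k * X 1 ^ l * C e⁻¹ * B₁ := by
        rw [hBdecomp, pow_add, pow_add]
        linear_combination (X 0 : MvPolynomial (Fin 2) 𝔽) ^ k * X 1 ^ l *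
          (X 0 ^ (d - 1) + X 1 ^ (d - 1)) * hee
      have hmem := hidealB (X 0 ^ k * X 1 ^ l * C e⁻¹)
      rw [hid] at hmem
      have hjunk : (X 0 : MvPolynomial (Fin 2) 𝔽) ^ k * X 1 ^ l * C e⁻¹ * B₁ ∈ V := by
        apply hlow
        calc (X 0 ^ k * X 1 ^ l * C e⁻¹ * B₁).totalDegree
            ≤ (X 0 ^ k * X 1 ^ l * C e⁻¹ : MvPolynomial (Fin 2) 𝔽).totalDegree
                + B₁.totalDegree := totalDegree_mul _ _
          _ ≤ ((X 0 ^ k * X 1 ^ l : MvPolynomial (Fin 2) 𝔽).totalDegree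
                + (C e⁻¹ : MvPolynomial (Fin 2) 𝔽).totalDegree) + B₁.totalDegree := by gcongr <;> exact totalDegree_mul _ _
          _ ≤ (k + l + 0) + (d - 2) := by
              rw [totalDegree_C]
              exact add_le_add (add_le_add (hmd k l) le_rfl) hB
          _ < N := by omega
      have := Submodule.sub_mem V hmem hjunk
      simpa using this
    -- the chain argument among monomials of total degree N
    set μ : ℕ → MvPolynomial (Fin 2) 𝔽 := fun t => X 0 ^ t * X 1 ^ (N - t) with hμdef
    have h0 : ∀ t : ℕ, t ≤ d - 2 → N - t ≤ d - 1 → μ t ∈ V := by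
      intro t ht hNt
      simp only [hμdef]
      exact hgen t (N - t) ht hNt
    have hstep' : ∀ t : ℕ, t + d ≤ N → μ t - μ (t + 1) ∈ V := by
      intro t htd
      obtain ⟨l, hl⟩ : ∃ l, N = t + l + d := ⟨N - t - d, by omega⟩
      have r1 := relA t l (by omega)
      have r2 := relB (t + 1) l (by omega)
      rw [show t + 1 + (d - 1) = t + d from by omega] at r2
      have hsub := Submodule.sub_mem V r1 r2
      have heq : (X 0 : MvPolynomial (Fin 2) 𝔽) ^ (t + d) * X 1 ^ l + X 0 ^ t * X 1 ^ (l + d)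
          - (X 0 ^ (t + d) * X 1 ^ l + X 0 ^ (t + 1) * X 1 ^ (l + (d - 1)))
          = μ t - μ (t + 1) := by
        simp only [hμdef]
        rw [show N - t = l + d from by omega, show N - (t + 1) = l + (d - 1) from by omega]
        ring
      rwa [heq] at hsub
    have hdown : ∀ t : ℕ, d - 1 ≤ t → t ≤ N → μ t + μ (t - (d - 1)) ∈ V := by
      intro t h1t h2t
      have r := relB (t - (d - 1)) (N - t) (by omega)
      rw [show t - (d - 1) + (d - 1) = t from by omega] at r
      have heq : (X 0 : MvPolynomial (Fin 2) 𝔽) ^ t * X 1 ^ (N - t)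
          + X 0 ^ (t - (d - 1)) * X 1 ^ (N - t + (d - 1)) = μ t + μ (t - (d - 1)) := by
        simp only [hμdef]
        rw [show N - (t - (d - 1)) = N - t + (d - 1) from by omega]
      rwa [heq] at r
    have base : ∀ t : ℕ, t ≤ d - 2 → t ≤ N → μ t ∈ V := by
      by_cases hbig : 2 * d - 2 ≤ N
      · have hchain : ∀ t : ℕ, t ≤ d - 1 → μ 0 - μ t ∈ V := by
          intro t
          induction t with
          | zero => intro _; simpa using Submodule.zero_mem V
          | succ t iht =>
            intro ht
            have g1 := iht (by omega)
            have g2 := hstep' t (by omega)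
            have g3 := Submodule.add_mem V g1 g2
            rwa [show μ 0 - μ t + (μ t - μ (t + 1)) = μ 0 - μ (t + 1) from by ring] at g3
        have hd1 : μ (d - 1) + μ 0 ∈ V := by
          have g := hdown (d - 1) le_rfl (by omega)
          rwa [Nat.sub_self] at g
        have hμ0 : μ 0 ∈ V := by
          have hsum := Submodule.add_mem V hd1 (hchain (d - 1) le_rfl)
          rw [show μ (d - 1) + μ 0 + (μ 0 - μ (d - 1)) = (2 : 𝔽) • μ 0 from by
            rw [two_smul]; ring] at hsum
          have g := Submodule.smul_mem V (2 : 𝔽)⁻¹ hsum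
          rwa [smul_smul, inv_mul_cancel₀ h2, one_smul] at g
        intro t ht _
        have g := Submodule.sub_mem V hμ0 (hchain t (by omega))
        rwa [show μ 0 - (μ 0 - μ t) = μ t from by ring] at g
      · intro t ht htN
        by_cases hsm : N - t ≤ d - 1
        · exact h0 t ht hsm
        · have hchain2 : ∀ s : ℕ, t + s ≤ N - d + 1 → μ t - μ (t + s) ∈ V := by
            intro s
            induction s with
            | zero => intro _; simpa using Submodule.zero_mem V
            | succ s ihs =>
              intro hs
              have g1 := ihs (by omega)
              have g2 := hstep' (t + s) (by omega)
              have g3 := Submodule.add_mem V g1 g2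
              rwa [show μ t - μ (t + s) + (μ (t + s) - μ (t + s + 1)) = μ t - μ (t + (s + 1))
                from by rw [show t + (s + 1) = t + s + 1 from by omega]; ring] at g3
          have hend : μ (N - d + 1) ∈ V := h0 _ (by omega) (by omega)
          have hch := hchain2 (N - d + 1 - t) (by omega)
          rw [show t + (N - d + 1 - t) = N - d + 1 from by omega] at hch
          have g := Submodule.add_mem V hch hend
          rwa [show μ t - μ (N - d + 1) + μ (N - d + 1) = μ t from by ring] at g
    have hall : ∀ t : ℕ, t ≤ N → μ t ∈ V := by
      intro t
      induction t using Nat.strong_induction_on with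
      | _ t IHt =>
      intro htN
      by_cases hsmall : t ≤ d - 2
      · exact base t hsmall htN
      · have h1t : d - 1 ≤ t := by omega
        have hprev : μ (t - (d - 1)) ∈ V := IHt (t - (d - 1)) (by omega) (by omega)
        have g := Submodule.sub_mem V (hdown t h1t htN) hprev
        rwa [show μ t + μ (t - (d - 1)) - μ (t - (d - 1)) = μ t from by ring] at g
    have hfin : μ i ∈ V := hall i (by omega)
    simp only [hμdef] at hfin
    rwa [show N - i = j from by omega] at hfin
  have hVtop : ∀ p : MvPolynomial (Fin 2) 𝔽, p ∈ V :=
    fun p => memV_of_totalDegree_le (fun i j h => main p.totalDegree i j h) le_rfl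
  set Z : Set (Fin 2 → 𝔽) := {v | eval v A = 0 ∧ eval v B = 0} with hZdef
  haveI : Fintype Z := (Set.toFinite Z).fintype
  set evL : MvPolynomial (Fin 2) 𝔽 →ₗ[𝔽] (Z → 𝔽) :=
    { toFun := fun p z => eval (z : Fin 2 → 𝔽) p
      map_add' := by intro p q; funext z; simp
      map_smul' := by intro r p; funext z; simp [MvPolynomial.smul_eq_C_mul] } with hevLdef
  have hevL : ∀ (p : MvPolynomial (Fin 2) 𝔽) (z : Z), evL p z = eval (z : Fin 2 → 𝔽) p :=
    fun p z => rfl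
  have hsurj : Function.Surjective evL := by
    intro φ
    refine ⟨∑ v : Fin 2 → 𝔽, (if hv : v ∈ Z then φ ⟨v, hv⟩ else 0) • indicator v, ?_⟩
    funext z
    rw [hevL, map_sum]
    rw [Finset.sum_eq_single (z : Fin 2 → 𝔽)]
    · rw [MvPolynomial.smul_eq_C_mul, map_mul, eval_C, eval_indicator_apply_eq_one,
        mul_one, dif_pos z.2, Subtype.coe_eta]
    · intro v _ hvz
      rw [MvPolynomial.smul_eq_C_mul, map_mul,
        eval_indicator_apply_eq_zero _ _ (Ne.symm hvz), mul_zero]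
    · intro hz; exact absurd (Finset.mem_univ _) hz
  have hker : ∀ p ∈ Ideal.span ({A, B} : Set (MvPolynomial (Fin 2) 𝔽)), evL p = 0 := by
    intro p hp
    rw [Ideal.mem_span_pair] at hp
    obtain ⟨x, y, rfl⟩ := hp
    funext z
    have hz := z.2
    simp only [hZdef, Set.mem_setOf_eq] at hz
    rw [hevL, map_add, map_mul, map_mul, hz.1, hz.2, mul_zero, mul_zero, add_zero]
    rfl
  have hspan : Submodule.span 𝔽
      ((S.image (fun p => evL p) : Finset (Z → 𝔽)) : Set (Z → 𝔽)) = ⊤ := by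
    rw [Submodule.eq_top_iff']
    intro φ
    obtain ⟨p, rfl⟩ := hsurj φ
    have hpV := hVtop p
    rw [hVdef, Submodule.mem_sup] at hpV
    obtain ⟨p₁, hp₁, p₂, hp₂, rfl⟩ := hpV
    rw [map_add]
    apply Submodule.add_mem
    · have hmapped : evL p₁ ∈ Submodule.map evL (Submodule.span 𝔽
        (S : Set (MvPolynomial (Fin 2) 𝔽))) := ⟨p₁, hp₁, rfl⟩
      rw [Submodule.map_span] at hmapped
      rwa [Finset.coe_image]
    · rw [hker p₂ hp₂]
      exact Submodule.zero_mem _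
  have hrank : Fintype.card Z ≤ (d - 1) * d := by
    have h1 : Module.finrank 𝔽 (Z → 𝔽) = Fintype.card Z := Module.finrank_pi 𝔽
    have h3 : Set.finrank 𝔽 ((S.image (fun p => evL p) : Finset (Z → 𝔽)) : Set (Z → 𝔽))
        = Module.finrank 𝔽 (Z → 𝔽) := by
      rw [Set.finrank, hspan, finrank_top]
    have h2 := finrank_span_finset_le_card (R := 𝔽) (S.image (fun p => evL p))
    rw [h3, h1] at h2
    refine h2.trans ?_
    refine (Finset.card_image_le).trans ?_
    rw [hSdef]
    refine (Finset.card_image_le).trans ?_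
    rw [Finset.card_product, Finset.card_range, Finset.card_range]
  calc Z.ncard = Nat.card Z := (Nat.card_coe_set_eq Z).symm
    _ = Fintype.card Z := Nat.card_eq_fintype_card
    _ ≤ (d - 1) * d := hrank
    _ = d * (d - 1) := Nat.mul_comm _ _


open MvPolynomial in
private lemma totalDegree_aeval_X_le {𝔽 : Type*} [Field 𝔽] (p : Polynomial 𝔽) (s : Fin 2) :
    ((Polynomial.aeval (X s : MvPolynomial (Fin 2) 𝔽)) p).totalDegree ≤ p.natDegree := by
  rw [Polynomial.aeval_eq_sum_range]
  refine (totalDegree_finset_sum _ _).trans ?_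
  refine Finset.sup_le fun i hi => ?_
  refine (totalDegree_smul_le _ _).trans ?_
  rw [totalDegree_X_pow]
  exact Nat.lt_succ_iff.mp (Finset.mem_range.mp hi)

open MvPolynomial in
private lemma eval_aeval_X {𝔽 : Type*} [Field 𝔽] (v : Fin 2 → 𝔽) (p : Polynomial 𝔽)
    (s : Fin 2) : eval v ((Polynomial.aeval (X s : MvPolynomial (Fin 2) 𝔽)) p)
      = p.eval (v s) := by
  induction p using Polynomial.induction_on' with
  | add p q hp hq => simp [hp, hq]
  | monomial n r => simp [Polynomial.aeval_monomial, MvPolynomial.algebraMap_eq]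


open MvPolynomial in
/-- For a finite field `𝔽_q` of odd characteristic, an odd polynomial `f`
(`f(-X) = -f(X)`) of degree `d ≥ 2` with `gcd(d, q) = 1`, and nonzero `a, b`, the
`(-1)`-BCT entry satisfies `₍₋₁₎B_f(a,b) ≤ d·(d-1)`. -/
theorem neg_one_boomerang_bound_odd_fn {𝔽 : Type*} [Field 𝔽] [Fintype 𝔽]
    (hchar : ringChar 𝔽 ≠ 2)
    (f : Polynomial 𝔽) (d : ℕ) (hdeg : f.natDegree = d) (hd : 2 ≤ d)
    (hcop : Nat.gcd d (Fintype.card 𝔽) = 1)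
    (hodd : f.comp (-Polynomial.X) = -f)
    (a b : 𝔽) (ha : a ≠ 0) (hb : b ≠ 0) :
    cBCT (fun x => f.eval x) (-1) a b ≤ d * (d - 1) := by
  classical
  have hf0 : f ≠ 0 := by
    intro h
    rw [h, Polynomial.natDegree_zero] at hdeg
    omega
  set c : 𝔽 := f.coeff d with hcdef
  have hclead : c = f.leadingCoeff := by rw [hcdef, Polynomial.leadingCoeff, hdeg]
  have hc : c ≠ 0 := by rw [hclead]; exact Polynomial.leadingCoeff_ne_zero.mpr hf0
  have hp : (ringChar 𝔽).Prime := CharP.char_is_prime 𝔽 (ringChar 𝔽)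
  have hcard : ringChar 𝔽 ∣ Fintype.card 𝔽 := by
    obtain ⟨n, -, hn⟩ := FiniteField.card 𝔽 (ringChar 𝔽)
    rw [hn]
    exact dvd_pow_self _ n.2.ne'
  have hd𝔽 : (d : 𝔽) ≠ 0 := by
    intro h
    rw [CharP.cast_eq_zero_iff 𝔽 (ringChar 𝔽)] at h
    have hg := Nat.dvd_gcd h hcard
    rw [hcop, Nat.dvd_one] at hg
    exact hp.one_lt.ne' hg
  have h2 : (2 : 𝔽) ≠ 0 := by
    intro h
    have h' : ((2 : ℕ) : 𝔽) = 0 := by exact_mod_cast h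
    rw [CharP.cast_eq_zero_iff 𝔽 (ringChar 𝔽)] at h'
    rename' h' => h
    rcases (Nat.prime_two.eq_one_or_self_of_dvd _ h) with h1 | h1
    · exact hp.one_lt.ne' h1
    · exact hchar h1
  set e : 𝔽 := (d : 𝔽) * c * a with hedef
  have he : e ≠ 0 := mul_ne_zero (mul_ne_zero hd𝔽 hc) ha
  set g : Polynomial 𝔽 := Polynomial.taylor a f - f with hgdef
  have hgcoeff : ∀ k, g.coeff k = (Polynomial.hasseDeriv k f).eval a - f.coeff k := by
    intro k
    rw [hgdef, Polynomial.coeff_sub, Polynomial.taylor_coeff]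
  have hgc : ∀ k, d - 1 < k → g.coeff k = 0 := by
    intro k hk
    have hdk : d ≤ k := by omega
    rcases eq_or_lt_of_le hdk with rfl | hlt
    · have hH : Polynomial.hasseDeriv d f = Polynomial.C c := by
        ext n
        rw [Polynomial.hasseDeriv_coeff, Polynomial.coeff_C]
        rcases n with _ | n
        · simp [hcdef]
        · have hz : f.coeff (n + 1 + d) = 0 :=
            Polynomial.coeff_eq_zero_of_natDegree_lt (by omega)
          simp [hz]
      rw [hgcoeff, hH, Polynomial.eval_C, hcdef, sub_self]
    · have hH : Polynomial.hasseDeriv k f = 0 := by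
        ext n
        rw [Polynomial.hasseDeriv_coeff]
        have hz : f.coeff (n + k) = 0 :=
          Polynomial.coeff_eq_zero_of_natDegree_lt (by omega)
        simp [hz]
      rw [hgcoeff, hH]
      have hz : f.coeff k = 0 := Polynomial.coeff_eq_zero_of_natDegree_lt (by omega)
      simp [hz]
  have hgd1 : g.coeff (d - 1) = e := by
    have hH : Polynomial.hasseDeriv (d - 1) f
        = Polynomial.C (f.coeff (d - 1)) + Polynomial.C ((d : 𝔽) * c) * Polynomial.X := by
      ext n
      rw [Polynomial.hasseDeriv_coeff]
      rcases n with _ | n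
      · simp
      rcases n with _ | n
      · have h1 : 1 + (d - 1) = d := by omega
        have hch : d.choose (d - 1) = d := by
          have hsymm := Nat.choose_symm (show d - 1 ≤ d by omega)
          rw [show d - (d - 1) = 1 from by omega, Nat.choose_one_right] at hsymm
          exact hsymm.symm
        rw [h1, hch]
        simp [hcdef]
      · have hz : f.coeff (n + 1 + 1 + (d - 1)) = 0 :=
          Polynomial.coeff_eq_zero_of_natDegree_lt (by omega)
        simp [hz, Polynomial.coeff_C]
    rw [hgcoeff, hH]
    simp only [Polynomial.eval_add, Polynomial.eval_C, Polynomial.eval_mul, Polynomial.eval_X]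
    rw [hedef]
    ring
  set A : MvPolynomial (Fin 2) 𝔽 :=
    Polynomial.aeval (X 0) f + Polynomial.aeval (X 1) f - C b with hAdef
  set B : MvPolynomial (Fin 2) 𝔽 :=
    Polynomial.aeval (X 0) g + Polynomial.aeval (X 1) g with hBdef
  have haevalsub : ∀ s : Fin 2, ∀ (p : Polynomial 𝔽) (r : 𝔽) (m : ℕ),
      (Polynomial.aeval (X s : MvPolynomial (Fin 2) 𝔽)) (p - Polynomial.C r * Polynomial.X ^ m)
        = Polynomial.aeval (X s) p - C r * X s ^ m := by
    intro s p r m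
    rw [map_sub, map_mul, map_pow, Polynomial.aeval_C, Polynomial.aeval_X,
      MvPolynomial.algebraMap_eq]
  have hA : (A - C c * (X 0 ^ d + X 1 ^ d)).totalDegree ≤ d - 1 := by
    have h0 := haevalsub 0 f c d
    have h1 := haevalsub 1 f c d
    rw [hclead, ← hdeg, Polynomial.self_sub_C_mul_X_pow] at h0 h1
    have hkey : A - C c * (X 0 ^ d + X 1 ^ d) =
        Polynomial.aeval (X 0) f.eraseLead + Polynomial.aeval (X 1) f.eraseLead + C (-b) := by
      rw [hAdef, hclead, ← hdeg, map_neg]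
      linear_combination - h0 - h1
    rw [hkey]
    refine (totalDegree_add _ _).trans (max_le ((totalDegree_add _ _).trans
      (max_le ?_ ?_)) ?_)
    · exact le_trans (totalDegree_aeval_X_le _ _)
        (le_trans (Polynomial.eraseLead_natDegree_le f) (by omega))
    · exact le_trans (totalDegree_aeval_X_le _ _)
        (le_trans (Polynomial.eraseLead_natDegree_le f) (by omega))
    · rw [totalDegree_C]
      exact Nat.zero_le _
  set g' : Polynomial 𝔽 := g - Polynomial.C e * Polynomial.X ^ (d - 1) with hg'def
  have hg'deg : g'.natDegree ≤ d - 2 := by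
    rw [Polynomial.natDegree_le_iff_coeff_eq_zero]
    intro k hk
    rw [hg'def, Polynomial.coeff_sub, Polynomial.coeff_C_mul, Polynomial.coeff_X_pow]
    rcases eq_or_ne k (d - 1) with rfl | hne
    · rw [hgd1, if_pos rfl, mul_one, sub_self]
    · rw [hgc k (by omega), if_neg hne]
      ring
  have hB : (B - C e * (X 0 ^ (d - 1) + X 1 ^ (d - 1))).totalDegree ≤ d - 2 := by
    have h0 := haevalsub 0 g e (d - 1)
    have h1 := haevalsub 1 g e (d - 1)
    rw [← hg'def] at h0 h1
    have hkey : B - C e * (X 0 ^ (d - 1) + X 1 ^ (d - 1)) =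
        Polynomial.aeval (X 0) g' + Polynomial.aeval (X 1) g' := by
      rw [hBdef]
      linear_combination - h0 - h1
    rw [hkey]
    refine (totalDegree_add _ _).trans (max_le ?_ ?_)
    · exact le_trans (totalDegree_aeval_X_le _ _) hg'deg
    · exact le_trans (totalDegree_aeval_X_le _ _) hg'deg
  have hinj : Function.Injective (fun p : 𝔽 × 𝔽 => ![p.1, p.1 + p.2]) := by
    intro p q h
    have h0 := congr_fun h 0
    have h1 := congr_fun h 1
    simp only [Matrix.cons_val_zero, Matrix.cons_val_one, Matrix.head_cons] at h0 h1
    refine Prod.ext h0 ?_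
    rw [h0] at h1
    exact add_left_cancel h1
  have hunfold : cBCT (fun x => f.eval x) (-1) a b = Set.ncard {p : 𝔽 × 𝔽 |
      f.eval (p.1 + p.2) - (-1) * f.eval p.1 = b ∧
      (-1) * f.eval (p.1 + p.2 + a) - f.eval (p.1 + a) = (-1) * b} := rfl
  rw [hunfold]
  have hsub : (fun p : 𝔽 × 𝔽 => ![p.1, p.1 + p.2]) '' {p : 𝔽 × 𝔽 |
      f.eval (p.1 + p.2) - (-1) * f.eval p.1 = b ∧
      (-1) * f.eval (p.1 + p.2 + a) - f.eval (p.1 + a) = (-1) * b}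
      ⊆ {v : Fin 2 → 𝔽 | eval v A = 0 ∧ eval v B = 0} := by
    rintro v ⟨⟨x, y⟩, hm, rfl⟩
    obtain ⟨hc1, hc2⟩ := hm
    simp only [Set.mem_setOf_eq] at hc1 hc2 ⊢
    constructor
    · rw [hAdef, map_sub, map_add, eval_aeval_X, eval_aeval_X, eval_C]
      simp only [Matrix.cons_val_zero, Matrix.cons_val_one, Matrix.head_cons]
      linear_combination hc1
    · rw [hBdef, map_add, eval_aeval_X, eval_aeval_X]
      simp only [Matrix.cons_val_zero, Matrix.cons_val_one, Matrix.head_cons]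
      rw [hgdef, Polynomial.eval_sub, Polynomial.eval_sub, Polynomial.taylor_eval,
        Polynomial.taylor_eval]
      linear_combination (-1 : 𝔽) * hc2 - hc1
  calc Set.ncard {p : 𝔽 × 𝔽 |
      f.eval (p.1 + p.2) - (-1) * f.eval p.1 = b ∧
      (-1) * f.eval (p.1 + p.2 + a) - f.eval (p.1 + a) = (-1) * b}
      = Set.ncard ((fun p : 𝔽 × 𝔽 => ![p.1, p.1 + p.2]) '' {p : 𝔽 × 𝔽 |
        f.eval (p.1 + p.2) - (-1) * f.eval p.1 = b ∧
        (-1) * f.eval (p.1 + p.2 + a) - f.eval (p.1 + a) = (-1) * b}) :=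
      (Set.ncard_image_of_injective _ hinj).symm
    _ ≤ Set.ncard {v : Fin 2 → 𝔽 | eval v A = 0 ∧ eval v B = 0} :=
      Set.ncard_le_ncard hsub (Set.toFinite _)
    _ ≤ d * (d - 1) := zero_set_card_bound h2 hd hc he hA hB
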